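/- There exists a unique tuple (x̂_0, ŵ_0,…,ŵ_{N−1}, η_1,…,η_N) with x̂_0 ∈ ℝ^n, ŵ_k ∈ ℝ^l and η_k ∈ ℝ^m satisfying |η_k| ≤ ε componentwise for all k, that minimizes the ε-insensitive cost J(x̂_0, ŵ, η) = ½[(x̂_0 − x̄_0)ᵀP(x̂_0 − x̄_0) + Σ_{k=0}^{N−1} ŵ_kᵀQŵ_k + Σ_{k=1}^{N} (y_k − C x̂_k − η_k)ᵀR(y_k − C x̂_k − η_k)] over all such feasible tuples, where x̂_1,…,x̂_N are generated from x̂_0 and ŵ by x̂_{k+1} = A x̂_k + B ŵ_k. -/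

import Mathlib

open Matrix

/-- State trajectory generated by `x_{k+1} = A x_k + B w_k` from initial state `x0`. -/
def traj {n l : ℕ} (A : Matrix (Fin n) (Fin n) ℝ) (B : Matrix (Fin n) (Fin l) ℝ)
    (x0 : Fin n → ℝ) (w : ℕ → Fin l → ℝ) : ℕ → Fin n → ℝ
  | 0 => x0
  | k + 1 => A *ᵥ traj A B x0 w k + B *ᵥ w k

/-- The ε-insensitive cost `J(x0, w, η)` for a tuple with disturbances `w_0, …, w_{N−1}`
(only the values `w_0, …, w_{N−1}` enter the cost and the generated states `x̂_1, …, x̂_N`). -/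
noncomputable def epsCostFin {n l m : ℕ} (N : ℕ)
    (A : Matrix (Fin n) (Fin n) ℝ) (B : Matrix (Fin n) (Fin l) ℝ)
    (C : Matrix (Fin m) (Fin n) ℝ)
    (P : Matrix (Fin n) (Fin n) ℝ) (Q : Matrix (Fin l) (Fin l) ℝ)
    (R : Matrix (Fin m) (Fin m) ℝ)
    (xbar : Fin n → ℝ) (y : ℕ → Fin m → ℝ)
    (x0 : Fin n → ℝ) (w : Fin N → Fin l → ℝ) (η : Fin N → Fin m → ℝ) : ℝ :=
  let w' : ℕ → Fin l → ℝ := fun k => if h : k < N then w ⟨k, h⟩ else 0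
  (1 / 2) * ((x0 - xbar) ⬝ᵥ P *ᵥ (x0 - xbar)
    + ∑ k : Fin N, w k ⬝ᵥ Q *ᵥ w k
    + ∑ k : Fin N,
        (y ((k : ℕ) + 1) - C *ᵥ traj A B x0 w' ((k : ℕ) + 1) - η k) ⬝ᵥ
          R *ᵥ (y ((k : ℕ) + 1) - C *ᵥ traj A B x0 w' ((k : ℕ) + 1) - η k))

/-!
The cost is `q ∘ g` for the positive definite block-diagonal quadratic form
`q = ½ diag(P, Q, …, Q, R, …, R)` and the affine map
`g (x̂₀, ŵ, η) = (x̂₀ - x̄₀, ŵ, (y_{k+1} - C x̂_{k+1} - η_k)_k)`. The map `g` is injective, since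
`x̂₀` and `ŵ` determine the states and then the residuals determine `η`. A positive definite
quadratic form composed with an injective affine map of a finite-dimensional space is strictly
convex and tends to infinity at infinity, hence has exactly one minimizer on every nonempty closed
convex set, such as the box `|η_k| ≤ ε`.
-/

open Filter Set Function

namespace QuadraticMap

section Algebra

variable {E : Type*} [AddCommGroup E] [Module ℝ E] {q : QuadraticForm ℝ E}

theorem map_combo_add_mul_map_sub (q : QuadraticForm ℝ E) (u v : E) {a b : ℝ}
    (hab : a + b = 1) : q (a • u + b • v) + a * b * q (u - v) = a * q u + b * q v := by
  have map_add_eq : ∀ x y, q (x + y) = q x + q y + polar q x y := fun x y => by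
    simp only [polar]; ring
  rw [map_add_eq, sub_eq_add_neg, map_add_eq, polar_smul_left, polar_smul_right, polar_neg_right,
    QuadraticMap.map_smul, QuadraticMap.map_smul, QuadraticMap.map_neg]
  simp only [smul_eq_mul]
  linear_combination (a * q u + b * q v) * hab

theorem PosDef.strictConvexOn (hq : q.PosDef) : StrictConvexOn ℝ univ q := by
  refine ⟨convex_univ, fun u _ v _ huv a b ha hb hab => ?_⟩
  have hcombo := map_combo_add_mul_map_sub q u v hab
  have hgap := mul_pos (mul_pos ha hb) (hq _ (sub_ne_zero.2 huv))
  simp only [smul_eq_mul]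
  linarith

end Algebra

section Topology

variable {F : Type*} [NormedAddCommGroup F] [NormedSpace ℝ F] [FiniteDimensional ℝ F]
  {q : QuadraticForm ℝ F}

theorem continuous_of_finiteDimensional (q : QuadraticForm ℝ F) : Continuous q := by
  let B : F →ₗ[ℝ] F →L[ℝ] ℝ :=
    LinearMap.toContinuousLinearMap.toLinearMap ∘ₗ associated (R := ℝ) q
  convert B.continuous_of_finiteDimensional.clm_apply continuous_id with v
  exact (associated_eq_self_apply ℝ q v).symm

theorem PosDef.exists_pos_mul_norm_sq_le (hq : q.PosDef) :
    ∃ μ > 0, ∀ v, μ * ‖v‖ ^ 2 ≤ q v := by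
  obtain ⟨μ, hμ, hsphere⟩ := (isCompact_sphere (0 : F) 1).exists_forall_le'
    q.continuous_of_finiteDimensional.continuousOn (a := 0)
    fun u hu => hq u (ne_zero_of_mem_unit_sphere ⟨u, hu⟩)
  refine ⟨μ, hμ, fun v => ?_⟩
  rcases eq_or_ne v 0 with rfl | hv
  · simp
  have hnorm : 0 < ‖v‖ := norm_pos_iff.2 hv
  have hunit := hsphere (‖v‖⁻¹ • v) (by simp [norm_smul, hnorm.ne'])
  rw [QuadraticMap.map_smul, smul_eq_mul] at hunit
  calc μ * ‖v‖ ^ 2 ≤ ‖v‖⁻¹ * ‖v‖⁻¹ * q v * ‖v‖ ^ 2 := by gcongr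
    _ = q v := by field_simp

theorem PosDef.tendsto_cocompact_atTop (hq : q.PosDef) : Tendsto q (cocompact F) atTop := by
  obtain ⟨μ, hμ, hle⟩ := hq.exists_pos_mul_norm_sq_le
  refine tendsto_atTop_mono hle (Tendsto.const_mul_atTop hμ ?_)
  exact (tendsto_pow_atTop two_ne_zero).comp tendsto_norm_cocompact_atTop

end Topology

end QuadraticMap

theorem StrictConvexOn.comp_affineMap_of_injective {𝕜 E F β : Type*} [Ring 𝕜] [PartialOrder 𝕜]
    [AddCommGroup E] [AddCommGroup F] [Module 𝕜 E] [Module 𝕜 F] [AddCommMonoid β]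
    [PartialOrder β] [SMul 𝕜 β] {f : F → β} {s : Set F} (hf : StrictConvexOn 𝕜 s f)
    (g : E →ᵃ[𝕜] F) (hg : Injective g) : StrictConvexOn 𝕜 (g ⁻¹' s) (f ∘ g) :=
  ⟨hf.1.affine_preimage g, fun x hx y hy hxy a b ha hb hab => by
    simpa only [Function.comp_apply, Convex.combo_affine_apply hab] using
      hf.2 hx hy (hg.ne hxy) ha hb hab⟩

theorem StrictConvexOn.existsUnique_isMinOn {E : Type*} [TopologicalSpace E] [AddCommGroup E]
    [Module ℝ E] {s : Set E} {f : E → ℝ} (hf : StrictConvexOn ℝ s f) (hcont : ContinuousOn f s)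
    (hs : IsClosed s) (hne : s.Nonempty) (htend : Tendsto f (cocompact E) atTop) :
    ∃! x, x ∈ s ∧ IsMinOn f s x := by
  obtain ⟨x₀, hx₀⟩ := hne
  obtain ⟨x, hx, hmin⟩ := hcont.exists_isMinOn' hs hx₀
    ((htend.eventually (eventually_ge_atTop (f x₀))).filter_mono inf_le_left)
  exact ⟨x, ⟨hx, hmin⟩, fun y ⟨hy, hymin⟩ => hf.eq_of_isMinOn hymin hmin hy hx⟩

theorem QuadraticMap.PosDef.existsUnique_isMinOn_comp {E F : Type*} [NormedAddCommGroup E]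
    [NormedSpace ℝ E] [FiniteDimensional ℝ E] [NormedAddCommGroup F] [NormedSpace ℝ F]
    [FiniteDimensional ℝ F] {q : QuadraticForm ℝ F} (hq : q.PosDef) {g : E →ᵃ[ℝ] F}
    (hg : Injective g) {s : Set E} (hs : IsClosed s) (hsc : Convex ℝ s) (hne : s.Nonempty) :
    ∃! x, x ∈ s ∧ IsMinOn (q ∘ g) s x := by
  obtain ⟨K, hK⟩ := AffineMap.antilipschitzWith_of_finiteDimensional hg
  have hg_cocompact : Tendsto g (cocompact E) (cocompact F) := by
    simpa only [Metric.cobounded_eq_cocompact] using hK.tendsto_cobounded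
  refine StrictConvexOn.existsUnique_isMinOn ?_
    (q.continuous_of_finiteDimensional.comp g.continuous_of_finiteDimensional).continuousOn
    hs hne (hq.tendsto_cocompact_atTop.comp hg_cocompact)
  exact (hq.strictConvexOn.comp_affineMap_of_injective g hg).subset (fun _ _ => trivial) hsc

section EpsInsensitive

variable {n l m N : ℕ} (A : Matrix (Fin n) (Fin n) ℝ) (B : Matrix (Fin n) (Fin l) ℝ)
  (C : Matrix (Fin m) (Fin n) ℝ)

theorem traj_add (x x' : Fin n → ℝ) (w w' : ℕ → Fin l → ℝ) (k : ℕ) :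
    traj A B (x + x') (w + w') k = traj A B x w k + traj A B x' w' k := by
  induction k with
  | zero => rfl
  | succ k ih => simp only [traj, ih, mulVec_add, Pi.add_apply]; abel

theorem traj_smul (c : ℝ) (x : Fin n → ℝ) (w : ℕ → Fin l → ℝ) (k : ℕ) :
    traj A B (c • x) (c • w) k = c • traj A B x w k := by
  induction k with
  | zero => rfl
  | succ k ih => simp only [traj, ih, mulVec_smul, Pi.smul_apply, smul_add]

variable (N) in
def extendByZero : (Fin N → Fin l → ℝ) →ₗ[ℝ] ℕ → Fin l → ℝ where
  toFun w k := if h : k < N then w ⟨k, h⟩ else 0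
  map_add' w w' := by ext k : 1; by_cases h : k < N <;> simp [h]
  map_smul' c w := by ext k : 1; by_cases h : k < N <;> simp [h]

def epsResidualₗ :
    (Fin n → ℝ) × (Fin N → Fin l → ℝ) × (Fin N → Fin m → ℝ) →ₗ[ℝ]
      (Fin n → ℝ) × (Fin N → Fin l → ℝ) × (Fin N → Fin m → ℝ) where
  toFun t := (t.1, t.2.1, fun k => -(C *ᵥ traj A B t.1 (extendByZero N t.2.1) (k + 1)) - t.2.2 k)
  map_add' s t := by
    ext <;> simp only [Prod.fst_add, Prod.snd_add, Prod.mk_add_mk, Pi.add_apply, Pi.sub_apply,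
      Pi.neg_apply, map_add, traj_add, mulVec_add]
    ring
  map_smul' c t := by
    ext <;> simp only [Prod.smul_fst, Prod.smul_snd, Prod.smul_mk, Pi.smul_apply, Pi.sub_apply,
      Pi.neg_apply, smul_eq_mul, RingHom.id_apply, map_smul, traj_smul, mulVec_smul]
    ring

def epsResidual (xbar : Fin n → ℝ) (y : ℕ → Fin m → ℝ) :
    (Fin n → ℝ) × (Fin N → Fin l → ℝ) × (Fin N → Fin m → ℝ) →ᵃ[ℝ]
      (Fin n → ℝ) × (Fin N → Fin l → ℝ) × (Fin N → Fin m → ℝ) where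
  toFun t := (t.1 - xbar, t.2.1,
    fun k => y (k + 1) - C *ᵥ traj A B t.1 (extendByZero N t.2.1) (k + 1) - t.2.2 k)
  linear := epsResidualₗ A B C
  map_vadd' t v := by
    ext <;> simp only [epsResidualₗ, LinearMap.coe_mk, AddHom.coe_mk, vadd_eq_add, Prod.fst_add,
      Prod.snd_add, Prod.mk_add_mk, Pi.add_apply, Pi.sub_apply, Pi.neg_apply, map_add, traj_add,
      mulVec_add] <;> ring

theorem epsResidual_injective (xbar : Fin n → ℝ) (y : ℕ → Fin m → ℝ) :
    Injective (epsResidual (N := N) A B C xbar y) := by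
  rintro ⟨x, w, η⟩ ⟨x', w', η'⟩ h
  simp only [epsResidual, AffineMap.coe_mk, Prod.mk.injEq, sub_left_inj] at h
  obtain ⟨rfl, rfl, h⟩ := h
  rw [funext fun k => sub_right_injective (congrFun h k)]

noncomputable def epsCostForm (P : Matrix (Fin n) (Fin n) ℝ) (Q : Matrix (Fin l) (Fin l) ℝ)
    (R : Matrix (Fin m) (Fin m) ℝ) :
    QuadraticForm ℝ ((Fin n → ℝ) × (Fin N → Fin l → ℝ) × (Fin N → Fin m → ℝ)) :=
  (1 / 2 : ℝ) • P.toQuadraticForm'.prod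
    ((QuadraticMap.pi fun _ => Q.toQuadraticForm').prod
      (QuadraticMap.pi fun _ => R.toQuadraticForm'))

theorem epsCostForm_posDef {P : Matrix (Fin n) (Fin n) ℝ} {Q : Matrix (Fin l) (Fin l) ℝ}
    {R : Matrix (Fin m) (Fin m) ℝ} (hP : P.PosDef) (hQ : Q.PosDef) (hR : R.PosDef) :
    (epsCostForm (N := N) P Q R).PosDef :=
  (hP.toQuadraticForm'.prod ((QuadraticMap.posDef_pi_iff.2 fun _ => hQ.toQuadraticForm').prod
    (QuadraticMap.posDef_pi_iff.2 fun _ => hR.toQuadraticForm'))).smul (by norm_num)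

theorem epsCostFin_eq_epsCostForm (P : Matrix (Fin n) (Fin n) ℝ) (Q : Matrix (Fin l) (Fin l) ℝ)
    (R : Matrix (Fin m) (Fin m) ℝ) (xbar : Fin n → ℝ) (y : ℕ → Fin m → ℝ)
    (t : (Fin n → ℝ) × (Fin N → Fin l → ℝ) × (Fin N → Fin m → ℝ)) :
    epsCostFin N A B C P Q R xbar y t.1 t.2.1 t.2.2 =
      epsCostForm P Q R (epsResidual A B C xbar y t) := by
  simp only [epsCostForm, _root_.smul_apply, QuadraticMap.prod_apply,
    QuadraticMap.pi_apply, Matrix.toQuadraticForm', LinearMap.BilinMap.toQuadraticMap_apply,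
    Matrix.toLinearMap₂'_apply', epsResidual, AffineMap.coe_mk, smul_eq_mul, ← add_assoc]
  rfl

def epsFeasible (ε : Fin m → ℝ) :
    Set ((Fin n → ℝ) × (Fin N → Fin l → ℝ) × (Fin N → Fin m → ℝ)) :=
  {t | ∀ k i, |t.2.2 k i| ≤ ε i}

theorem isClosed_epsFeasible (ε : Fin m → ℝ) : IsClosed (epsFeasible (n := n) (l := l) (N := N) ε) := by
  simp only [epsFeasible, ofPred_forall]
  exact isClosed_iInter fun k => isClosed_iInter fun i =>
    isClosed_le (by fun_prop) continuous_const

theorem convex_epsFeasible (ε : Fin m → ℝ) : Convex ℝ (epsFeasible (n := n) (l := l) (N := N) ε) := by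
  intro s hs t ht a b ha hb hab k i
  calc |a * s.2.2 k i + b * t.2.2 k i| ≤ a * |s.2.2 k i| + b * |t.2.2 k i| := by
        simpa only [abs_mul, abs_of_nonneg ha, abs_of_nonneg hb] using
          abs_add_le (a * s.2.2 k i) (b * t.2.2 k i)
    _ ≤ a * ε i + b * ε i := by gcongr; exacts [hs k i, ht k i]
    _ = ε i := by rw [← add_mul, hab, one_mul]

theorem epsFeasible_nonempty {ε : Fin m → ℝ} (hε : 0 ≤ ε) :
    (epsFeasible (n := n) (l := l) (N := N) ε).Nonempty :=
  ⟨0, fun _ i => by simpa using hε i⟩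

end EpsInsensitive

theorem eps_insensitive_minimizer_existsUnique_general
    (n l m N : ℕ)
    (A : Matrix (Fin n) (Fin n) ℝ) (B : Matrix (Fin n) (Fin l) ℝ)
    (C : Matrix (Fin m) (Fin n) ℝ)
    (P : Matrix (Fin n) (Fin n) ℝ) (Q : Matrix (Fin l) (Fin l) ℝ)
    (R : Matrix (Fin m) (Fin m) ℝ)
    (hP : P.PosDef) (hQ : Q.PosDef) (hR : R.PosDef)
    (xbar : Fin n → ℝ) (y : ℕ → Fin m → ℝ)
    (ε : Fin m → ℝ) (hε : ∀ i, 0 < ε i) :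
    ∃! t : (Fin n → ℝ) × (Fin N → Fin l → ℝ) × (Fin N → Fin m → ℝ),
      (∀ (k : Fin N) (i : Fin m), |t.2.2 k i| ≤ ε i) ∧
        ∀ t' : (Fin n → ℝ) × (Fin N → Fin l → ℝ) × (Fin N → Fin m → ℝ),
          (∀ (k : Fin N) (i : Fin m), |t'.2.2 k i| ≤ ε i) →
          epsCostFin N A B C P Q R xbar y t.1 t.2.1 t.2.2
            ≤ epsCostFin N A B C P Q R xbar y t'.1 t'.2.1 t'.2.2 := by
  simp only [epsCostFin_eq_epsCostForm]
  exact (epsCostForm_posDef hP hQ hR).existsUnique_isMinOn_comp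
    (epsResidual_injective A B C xbar y) (isClosed_epsFeasible ε) (convex_epsFeasible ε)
    (epsFeasible_nonempty fun i => (hε i).le)

/-- **Existence and uniqueness of the ε-insensitive optimal estimate.**
There is a unique feasible tuple `(x̂_0, ŵ_0, …, ŵ_{N−1}, η_1, …, η_N)` with `|η_k| ≤ ε`
componentwise minimizing the ε-insensitive cost `J` over all feasible tuples. -/
theorem eps_insensitive_minimizer_existsUnique
    (n l m N : ℕ) (hN : 1 ≤ N)
    (A : Matrix (Fin n) (Fin n) ℝ) (B : Matrix (Fin n) (Fin l) ℝ)
    (C : Matrix (Fin m) (Fin n) ℝ)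
    (P : Matrix (Fin n) (Fin n) ℝ) (Q : Matrix (Fin l) (Fin l) ℝ)
    (R : Matrix (Fin m) (Fin m) ℝ)
    (hP : P.PosDef) (hQ : Q.PosDef) (hR : R.PosDef)
    (xbar : Fin n → ℝ) (y : ℕ → Fin m → ℝ)
    (ε : Fin m → ℝ) (hε : ∀ i, 0 < ε i) :
    ∃! t : (Fin n → ℝ) × (Fin N → Fin l → ℝ) × (Fin N → Fin m → ℝ),
      (∀ (k : Fin N) (i : Fin m), |t.2.2 k i| ≤ ε i) ∧
        ∀ t' : (Fin n → ℝ) × (Fin N → Fin l → ℝ) × (Fin N → Fin m → ℝ),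
          (∀ (k : Fin N) (i : Fin m), |t'.2.2 k i| ≤ ε i) →
          epsCostFin N A B C P Q R xbar y t.1 t.2.1 t.2.2
            ≤ epsCostFin N A B C P Q R xbar y t'.1 t'.2.1 t'.2.2 :=
  eps_insensitive_minimizer_existsUnique_general n l m N A B C P Q R hP hQ hR xbar y ε hε
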